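/- arXiv:2104.06880 — 3 statements merged into one kernel-verified Lean document; each statement's English description precedes it below -/
import Mathlib

section
/- Let V be a finite-dimensional real inner product space, T > 0 and γ > 0. For each t ∈ [0,T] let b_t, s_t : V × V → ℝ be bilinear forms, depending continuously on t, such that b_t(v,v) = 0 for all v ∈ V and s_t is symmetric with s_t(v,v) ≥ 0 for all v ∈ V. For each t let F_t : V → ℝ be linear, depending continuously on t, and let M : [0,T] → [0,∞) be continuous with |F_t(v)| ≤ M(t)·(‖v‖ + s_t(v,v)^{1/2}) for all v ∈ V and t ∈ [0,T]. Suppose u : [0,T] → V is continuously differentiable and satisfies ⟪u'(t), v⟫ + b_t(u(t), v) + γ·s_t(u(t), v) = F_t(v) for all v ∈ V and t ∈ [0,T]. Then there exists a constant C > 0, independent of V, T, γ, b, s, F, M and u, such that for every τ ∈ [0,T]: ‖u(τ)‖² + γ·∫₀^τ s_t(u(t),u(t)) dt ≤ C·( (γ⁻¹ + T)·∫₀^τ M(t)² dt + ‖u(0)‖² ). -/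
open MeasureTheory
open scoped RealInnerProductSpace

lemma eval_continuousOn {V : Type} [NormedAddCommGroup V] [NormedSpace ℝ V]
    [FiniteDimensional ℝ V] {Ω : Set ℝ} {L : ℝ → V →ₗ[ℝ] ℝ}
    (hL : ∀ v : V, ContinuousOn (fun t => L t v) Ω) {u : ℝ → V}
    (hu : ContinuousOn u Ω) : ContinuousOn (fun t => L t (u t)) Ω := by
  classical
  set b := Module.finBasis ℝ V with hb
  have key : ∀ t, L t (u t) = ∑ i, (b.coord i) (u t) * L t (b i) := by
    intro t
    conv_lhs => rw [← b.sum_repr (u t)]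
    rw [map_sum]
    simp [Module.Basis.coord_apply, smul_eq_mul]
  have hc : ContinuousOn (fun t => ∑ i, (b.coord i) (u t) * L t (b i)) Ω := by
    apply continuousOn_finset_sum
    intro i _
    exact (((b.coord i).continuous_of_finiteDimensional).comp_continuousOn hu).mul (hL (b i))
  exact hc.congr fun t ht => key t

/-- Abstract form of the stability estimate (Theorem 1) for the semi-discrete
stabilized finite element scheme. -/
theorem stability_estimate_stabilized_scheme :
    ∃ C : ℝ, 0 < C ∧
      ∀ (V : Type) [NormedAddCommGroup V] [InnerProductSpace ℝ V]
        [FiniteDimensional ℝ V]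
        (T γ : ℝ), 0 < T → 0 < γ →
        ∀ b s : ℝ → V →ₗ[ℝ] V →ₗ[ℝ] ℝ,
        (∀ v w : V, ContinuousOn (fun t => b t v w) (Set.Icc 0 T)) →
        (∀ t ∈ Set.Icc (0:ℝ) T, ∀ v : V, b t v v = 0) →
        (∀ v w : V, ContinuousOn (fun t => s t v w) (Set.Icc 0 T)) →
        (∀ t ∈ Set.Icc (0:ℝ) T, ∀ v w : V, s t v w = s t w v) →
        (∀ t ∈ Set.Icc (0:ℝ) T, ∀ v : V, 0 ≤ s t v v) →
        ∀ F : ℝ → V →ₗ[ℝ] ℝ,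
        (∀ v : V, ContinuousOn (fun t => F t v) (Set.Icc 0 T)) →
        ∀ M : ℝ → ℝ, ContinuousOn M (Set.Icc 0 T) →
        (∀ t ∈ Set.Icc (0:ℝ) T, 0 ≤ M t) →
        (∀ t ∈ Set.Icc (0:ℝ) T, ∀ v : V,
          |F t v| ≤ M t * (‖v‖ + Real.sqrt (s t v v))) →
        ∀ u u' : ℝ → V,
        (∀ t ∈ Set.Icc (0:ℝ) T, HasDerivAt u (u' t) t) →
        ContinuousOn u' (Set.Icc 0 T) →
        (∀ t ∈ Set.Icc (0:ℝ) T, ∀ v : V,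
          ⟪u' t, v⟫ + b t (u t) v + γ * s t (u t) v = F t v) →
        ∀ τ ∈ Set.Icc (0:ℝ) T,
          ‖u τ‖ ^ 2 + γ * ∫ t in (0:ℝ)..τ, s t (u t) (u t) ≤
            C * ((γ⁻¹ + T) * (∫ t in (0:ℝ)..τ, (M t) ^ 2) + ‖u 0‖ ^ 2) := by
  refine ⟨4, by norm_num, ?_⟩
  intro V _ _ _ T γ hT hγ b s hbcont hbskew hscont hssymm hspos F hFcont M hMcont hMpos
    hFbound u u' hu hu'cont heq τ hτ
  obtain ⟨hτ0, hτT⟩ := hτ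
  have hIcc : Set.Icc (0:ℝ) τ ⊆ Set.Icc 0 T := Set.Icc_subset_Icc le_rfl hτT
  -- continuity facts
  have cu : ContinuousOn u (Set.Icc 0 T) := fun t ht =>
    ((hu t ht).continuousAt).continuousWithinAt
  have cs1 : ∀ w, ContinuousOn (fun t => s t (u t) w) (Set.Icc 0 T) := by
    intro w
    have h := eval_continuousOn (L := fun t => (s t).flip w)
      (fun v => by simpa using hscont v w) cu
    simpa using h
  have cs : ContinuousOn (fun t => s t (u t) (u t)) (Set.Icc 0 T) :=
    eval_continuousOn (L := fun t => s t (u t)) cs1 cu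
  have cg' : ContinuousOn (fun t => (2:ℝ) * ⟪u' t, u t⟫) (Set.Icc 0 T) :=
    continuousOn_const.mul (hu'cont.inner cu)
  have hMsq : ContinuousOn (fun t => (M t)^2) (Set.Icc 0 T) := hMcont.pow 2
  -- g and its derivative
  set g : ℝ → ℝ := fun t => ⟪u t, u t⟫ with hgdef
  have hgderiv : ∀ t ∈ Set.Icc (0:ℝ) T, HasDerivAt g (2 * ⟪u' t, u t⟫) t := by
    intro t ht
    have h := HasDerivAt.inner ℝ (hu t ht) (hu t ht)
    have : ⟪u t, u' t⟫ + ⟪u' t, u t⟫ = 2 * ⟪u' t, u t⟫ := by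
      rw [real_inner_comm]; ring
    rwa [this] at h
  have hgnorm : ∀ t, g t = ‖u t‖ ^ 2 := fun t => real_inner_self_eq_norm_sq (u t)
  -- maximum of g on [0, τ]
  have hne : (Set.Icc (0:ℝ) τ).Nonempty := Set.nonempty_Icc.2 hτ0
  have cg : ContinuousOn g (Set.Icc 0 τ) := (cu.mono hIcc).inner (cu.mono hIcc)
  obtain ⟨ts, hts, htsmax⟩ := isCompact_Icc.exists_isMaxOn hne cg
  set y := g ts with hydef
  have hy0 : 0 ≤ y := by rw [hydef, hgnorm]; positivity
  set I := ∫ t in (0:ℝ)..τ, (M t)^2 with hIdef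
  have Mτint : IntervalIntegrable (fun t => (M t)^2) volume 0 τ :=
    (hMsq.mono hIcc).intervalIntegrable_of_Icc hτ0
  have hI0 : 0 ≤ I := intervalIntegral.integral_nonneg hτ0 (fun t _ => sq_nonneg _)
  -- pointwise estimate
  have hpt : ∀ t ∈ Set.Icc (0:ℝ) τ,
      2 * ⟪u' t, u t⟫ + γ * s t (u t) (u t) ≤ (2*T + γ⁻¹) * (M t)^2 + y / (2*T) := by
    intro t ht
    have htT := hIcc ht
    have heqt := heq t htT (u t)
    rw [hbskew t htT (u t)] at heqt
    have hFb := hFbound t htT (u t)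
    set m := M t with hm
    set a := ‖u t‖ with ha
    set q := s t (u t) (u t) with hq
    have hq0 : 0 ≤ q := hspos t htT (u t)
    have hsq : Real.sqrt q ^ 2 = q := Real.sq_sqrt hq0
    have hsqnn : 0 ≤ Real.sqrt q := Real.sqrt_nonneg q
    have hm0 : 0 ≤ m := hMpos t htT
    have ha2 : a^2 ≤ y := by
      have h := htsmax ht
      have h2 : g t ≤ y := h
      rw [hgnorm] at h2; exact h2
    have hFub : F t (u t) ≤ m * (a + Real.sqrt q) := le_trans (le_abs_self _) hFb
    have h1 : 2*m*a - 2*T*m^2 ≤ y/(2*T) := by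
      rw [le_div_iff₀ (by positivity)]
      nlinarith [sq_nonneg (2*T*m - a), sq_nonneg m, hT, ha2]
    have h2 : 2*m*Real.sqrt q - γ*q ≤ γ⁻¹*m^2 := by
      rw [inv_mul_eq_div, le_div_iff₀ hγ]
      have hexp : γ^2 * q = (γ * Real.sqrt q)^2 := by rw [mul_pow, hsq]
      nlinarith [sq_nonneg (m - γ * Real.sqrt q), hexp]
    nlinarith [heqt, hFub, h1, h2]
  -- key integrated estimate
  have key : ∀ σ ∈ Set.Icc (0:ℝ) τ,
      g σ + γ * ∫ t in (0:ℝ)..σ, s t (u t) (u t) ≤ g 0 + (2*T+γ⁻¹) * I + y/2 := by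
    intro σ hσ
    obtain ⟨hσ0, hστ⟩ := hσ
    have hσT := hστ.trans hτT
    have hsub : Set.Icc (0:ℝ) σ ⊆ Set.Icc 0 T := Set.Icc_subset_Icc le_rfl hσT
    have hsubτ : Set.Icc (0:ℝ) σ ⊆ Set.Icc 0 τ := Set.Icc_subset_Icc le_rfl hστ
    have iInt : IntervalIntegrable (fun t => 2 * ⟪u' t, u t⟫) volume 0 σ :=
      (cg'.mono hsub).intervalIntegrable_of_Icc hσ0
    have sInt : IntervalIntegrable (fun t => s t (u t) (u t)) volume 0 σ :=
      (cs.mono hsub).intervalIntegrable_of_Icc hσ0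
    have MInt : IntervalIntegrable (fun t => (M t)^2) volume 0 σ :=
      (hMsq.mono hsub).intervalIntegrable_of_Icc hσ0
    have Mστ : IntervalIntegrable (fun t => (M t)^2) volume σ τ :=
      (hMsq.mono (Set.Icc_subset_Icc hσ0 hτT)).intervalIntegrable_of_Icc hστ
    have ftc : ∫ t in (0:ℝ)..σ, 2 * ⟪u' t, u t⟫ = g σ - g 0 :=
      intervalIntegral.integral_eq_sub_of_hasDerivAt
        (fun t ht => hgderiv t (hsub (by rwa [Set.uIcc_of_le hσ0] at ht))) iInt
    have hsum : ∫ t in (0:ℝ)..σ, (2 * ⟪u' t, u t⟫ + γ * s t (u t) (u t)) =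
        (g σ - g 0) + γ * ∫ t in (0:ℝ)..σ, s t (u t) (u t) := by
      rw [intervalIntegral.integral_add iInt (sInt.const_mul γ), ftc,
        intervalIntegral.integral_const_mul]
    have hmono : ∫ t in (0:ℝ)..σ, (2 * ⟪u' t, u t⟫ + γ * s t (u t) (u t)) ≤
        ∫ t in (0:ℝ)..σ, ((2*T+γ⁻¹) * (M t)^2 + y/(2*T)) := by
      apply intervalIntegral.integral_mono_on hσ0 (iInt.add (sInt.const_mul γ))
        ((MInt.const_mul _).add intervalIntegrable_const)
      intro t ht; exact hpt t (hsubτ ht)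
    have hRHS : ∫ t in (0:ℝ)..σ, ((2*T+γ⁻¹) * (M t)^2 + y/(2*T)) =
        (2*T+γ⁻¹) * (∫ t in (0:ℝ)..σ, (M t)^2) + σ * (y/(2*T)) := by
      rw [intervalIntegral.integral_add (MInt.const_mul _) intervalIntegrable_const,
        intervalIntegral.integral_const_mul, intervalIntegral.integral_const]
      simp [smul_eq_mul]
    have hMmono : ∫ t in (0:ℝ)..σ, (M t)^2 ≤ I := by
      have hsplit : (∫ t in (0:ℝ)..σ, (M t)^2) + ∫ t in σ..τ, (M t)^2 = I :=
        intervalIntegral.integral_add_adjacent_intervals MInt Mστ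
      have hnn : 0 ≤ ∫ t in σ..τ, (M t)^2 :=
        intervalIntegral.integral_nonneg hστ (fun t _ => sq_nonneg _)
      linarith
    have hconst : σ * (y/(2*T)) ≤ y/2 := by
      have h1 : σ * (y/(2*T)) ≤ T * (y/(2*T)) :=
        mul_le_mul_of_nonneg_right hσT (by positivity)
      have h2 : T * (y/(2*T)) = y/2 := by field_simp
      linarith
    have hcoef : (2*T+γ⁻¹) * (∫ t in (0:ℝ)..σ, (M t)^2) ≤ (2*T+γ⁻¹) * I :=
      mul_le_mul_of_nonneg_left hMmono (by positivity)
    linarith [hsum ▸ hmono]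
  -- conclude
  have h1 := key ts hts
  have h2 := key τ ⟨hτ0, le_refl τ⟩
  have hss : 0 ≤ ∫ t in (0:ℝ)..ts, s t (u t) (u t) :=
    intervalIntegral.integral_nonneg hts.1
      (fun t ht => hspos t (hIcc ⟨ht.1, ht.2.trans hts.2⟩) (u t))
  have hssγ : 0 ≤ γ * ∫ t in (0:ℝ)..ts, s t (u t) (u t) := mul_nonneg hγ.le hss
  have hg0 : g 0 = ‖u 0‖ ^ 2 := hgnorm 0
  have hgτ : g τ = ‖u τ‖ ^ 2 := hgnorm τ
  have hg00 : 0 ≤ g 0 := by rw [hg0]; positivity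
  have hy2 : y ≤ 2 * g 0 + 2 * ((2*T+γ⁻¹) * I) := by linarith
  have hγinv : 0 < γ⁻¹ := inv_pos.2 hγ
  rw [← hgτ, ← hg0]
  nlinarith [h2, hy2, hg00, hI0, hγinv.le, hT.le, mul_nonneg hγinv.le hI0, mul_nonneg hT.le hI0]
end

section
/- Let n ≥ 1 and T > 0. Let β : ℝⁿ → ℝⁿ be a C¹ divergence-free vector field, and let ϖ : ℝ × ℝⁿ → ℝ be a C¹ function satisfying ∂ₜϖ(t,x) + β(x)·∇ₓϖ(t,x) = 0 for all (t,x). Let v : ℝ × ℝⁿ → ℝ be C¹ and suppose there is a compact set K ⊆ ℝⁿ with v(t,x) = 0 whenever t ∈ [0,T] and x ∉ K. Then ∫₀ᵀ ∫_{ℝⁿ} ( ∂ₜv(t,x) + β(x)·∇ₓv(t,x) )·ϖ(t,x)²·v(t,x) dx dt = ½·∫_{ℝⁿ} ϖ(T,x)²·v(T,x)² dx − ½·∫_{ℝⁿ} ϖ(0,x)²·v(0,x)² dx. -/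
open MeasureTheory

/-- Time partial derivative of a function of (t, x). -/
noncomputable def partialT {n : ℕ}
    (v : ℝ × EuclideanSpace ℝ (Fin n) → ℝ)
    (t : ℝ) (x : EuclideanSpace ℝ (Fin n)) : ℝ :=
  deriv (fun s => v (s, x)) t

/-- Convective spatial derivative β·∇ₓv = ∑ᵢ βᵢ ∂_{xᵢ}v of a function of (t, x). -/
noncomputable def betaGrad {n : ℕ}
    (β : EuclideanSpace ℝ (Fin n) → EuclideanSpace ℝ (Fin n))
    (v : ℝ × EuclideanSpace ℝ (Fin n) → ℝ)
    (t : ℝ) (x : EuclideanSpace ℝ (Fin n)) : ℝ :=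
  ∑ i, β x i * fderiv ℝ (fun y => v (t, y)) x (EuclideanSpace.single i 1)

/-!
Since `Lϖ = 0` for `L = ∂ₜ + β·∇`, the Leibniz rule gives `(Lv) ϖ² v = ½ L((ϖv)²)`.
At each time the convective part `β·∇((ϖv)²)` integrates to zero over space: integrating by
parts coordinatewise moves the derivatives onto `β`, where they add up to `div β = 0`. What
remains is `½ ∫₀ᵀ ∫ ∂ₜ(ϖv)² dx dt`, which by Fubini and the fundamental theorem of calculus in
`t` equals `½ ∫ (ϖv)²(T) - ½ ∫ (ϖv)²(0)`. Compact support of `v(t, ·)` for `t ∈ [0, T]` makes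
every integral finite and kills the boundary terms.
-/

open Set

section IntegrationByParts

variable {E : Type*} [NormedAddCommGroup E] [NormedSpace ℝ E] [MeasurableSpace E] [BorelSpace E]
  {μ : Measure E}

theorem HasCompactSupport.integrable_mul_fderiv_apply [IsFiniteMeasureOnCompacts μ]
    {a g : E → ℝ} (ha : Continuous a) (hg : ContDiff ℝ 1 g) (hgc : HasCompactSupport g) (e : E) :
    Integrable (fun x => a x * fderiv ℝ g x e) μ :=
  (ha.mul ((hg.continuous_fderiv one_ne_zero).clm_apply continuous_const))
    |>.integrable_of_hasCompactSupport (hgc.fderiv_apply (𝕜 := ℝ) e).mul_left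

theorem integral_mul_fderiv_eq_neg_fderiv_mul_of_hasCompactSupport [FiniteDimensional ℝ E]
    [μ.IsAddHaarMeasure] {f g : E → ℝ} (hf : ContDiff ℝ 1 f) (hg : ContDiff ℝ 1 g)
    (hgc : HasCompactSupport g) (e : E) :
    ∫ x, f x * fderiv ℝ g x e ∂μ = - ∫ x, fderiv ℝ f x e * g x ∂μ :=
  integral_mul_fderiv_eq_neg_fderiv_mul_of_integrable
    ((((hf.continuous_fderiv one_ne_zero).clm_apply continuous_const).mul
      hg.continuous).integrable_of_hasCompactSupport hgc.mul_left)
    (hgc.integrable_mul_fderiv_apply hf.continuous hg e)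
    ((hf.continuous.mul hg.continuous).integrable_of_hasCompactSupport hgc.mul_left)
    (fun x _ => hf.differentiable one_ne_zero x) (fun x _ => hg.differentiable one_ne_zero x)

end IntegrationByParts

noncomputable def transportDeriv {n : ℕ}
    (β : EuclideanSpace ℝ (Fin n) → EuclideanSpace ℝ (Fin n))
    (f : ℝ × EuclideanSpace ℝ (Fin n) → ℝ) (t : ℝ) (x : EuclideanSpace ℝ (Fin n)) : ℝ :=
  partialT f t x + betaGrad β f t x

section Transport

variable {n : ℕ} {β : EuclideanSpace ℝ (Fin n) → EuclideanSpace ℝ (Fin n)}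
  {f g : ℝ × EuclideanSpace ℝ (Fin n) → ℝ} {t : ℝ} {x : EuclideanSpace ℝ (Fin n)}

theorem hasDerivAt_partialT (hf : DifferentiableAt ℝ f (t, x)) :
    HasDerivAt (fun s => f (s, x)) (partialT f t x) t :=
  (hf.comp t (differentiableAt_id.prodMk (differentiableAt_const x))).hasDerivAt

theorem partialT_eq_fderiv_apply (hf : DifferentiableAt ℝ f (t, x)) :
    partialT f t x = fderiv ℝ f (t, x) (1, 0) :=
  (hf.hasFDerivAt.comp_hasDerivAt t ((hasDerivAt_id t).prodMk (hasDerivAt_const t x))).deriv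

theorem continuous_partialT (hf : ContDiff ℝ 1 f) :
    Continuous fun p : ℝ × EuclideanSpace ℝ (Fin n) => partialT f p.1 p.2 := by
  simp_rw [partialT_eq_fderiv_apply (hf.differentiable one_ne_zero _)]
  exact (hf.continuous_fderiv one_ne_zero).clm_apply continuous_const

theorem integrable_partialT (hf : ContDiff ℝ 1 f) {K : Set (EuclideanSpace ℝ (Fin n))}
    (hK : IsCompact K) (hzero : ∀ x ∉ K, partialT f t x = 0) :
    Integrable fun x => partialT f t x :=
  ((continuous_partialT hf).comp (continuous_const.prodMk continuous_id))
    |>.integrable_of_hasCompactSupport (HasCompactSupport.intro hK hzero)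

theorem partialT_mul (hf : DifferentiableAt ℝ f (t, x)) (hg : DifferentiableAt ℝ g (t, x)) :
    partialT (fun p => f p * g p) t x = partialT f t x * g (t, x) + f (t, x) * partialT g t x :=
  ((hasDerivAt_partialT hf).mul (hasDerivAt_partialT hg)).deriv

theorem betaGrad_mul (hf : DifferentiableAt ℝ f (t, x)) (hg : DifferentiableAt ℝ g (t, x)) :
    betaGrad β (fun p => f p * g p) t x =
      betaGrad β f t x * g (t, x) + f (t, x) * betaGrad β g t x := by
  have hslice : DifferentiableAt ℝ (fun y => ((t, y) : ℝ × EuclideanSpace ℝ (Fin n))) x :=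
    (differentiableAt_const t).prodMk differentiableAt_id
  have hf' : DifferentiableAt ℝ (fun y => f (t, y)) x := hf.comp x hslice
  have hg' : DifferentiableAt ℝ (fun y => g (t, y)) x := hg.comp x hslice
  simp only [betaGrad, fderiv_fun_mul hf' hg', add_apply, smul_apply, smul_eq_mul,
    Finset.sum_mul, Finset.mul_sum, ← Finset.sum_add_distrib]
  exact Finset.sum_congr rfl fun i _ => by ring

theorem partialT_sq (hf : DifferentiableAt ℝ f (t, x)) :
    partialT (fun p => f p ^ 2) t x = 2 * f (t, x) * partialT f t x := by
  simp only [sq, partialT_mul hf hf]; ring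

theorem betaGrad_sq (hf : DifferentiableAt ℝ f (t, x)) :
    betaGrad β (fun p => f p ^ 2) t x = 2 * f (t, x) * betaGrad β f t x := by
  simp only [sq, betaGrad_mul hf hf]; ring

theorem transportDeriv_mul (hf : DifferentiableAt ℝ f (t, x)) (hg : DifferentiableAt ℝ g (t, x)) :
    transportDeriv β (fun p => f p * g p) t x =
      transportDeriv β f t x * g (t, x) + f (t, x) * transportDeriv β g t x := by
  simp only [transportDeriv, partialT_mul hf hg, betaGrad_mul hf hg]; ring

theorem transportDeriv_sq (hf : DifferentiableAt ℝ f (t, x)) :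
    transportDeriv β (fun p => f p ^ 2) t x = 2 * f (t, x) * transportDeriv β f t x := by
  simp only [transportDeriv, partialT_sq hf, betaGrad_sq hf]; ring

theorem transportDeriv_mul_sq_of_transportDeriv_eq_zero {ϖ v : ℝ × EuclideanSpace ℝ (Fin n) → ℝ}
    (hϖ : DifferentiableAt ℝ ϖ (t, x)) (hv : DifferentiableAt ℝ v (t, x))
    (htrans : transportDeriv β ϖ t x = 0) :
    transportDeriv β (fun p => (ϖ p * v p) ^ 2) t x =
      2 * (transportDeriv β v t x * ϖ (t, x) ^ 2 * v (t, x)) := by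
  rw [transportDeriv_sq (f := fun p => ϖ p * v p) (hϖ.mul hv), transportDeriv_mul hϖ hv, htrans]
  ring

theorem integrable_betaGrad (hβ : Continuous β) (hf : ContDiff ℝ 1 f)
    (hc : HasCompactSupport fun x => f (t, x)) : Integrable fun x => betaGrad β f t x :=
  integrable_finsetSum _ fun i _ => hc.integrable_mul_fderiv_apply
    ((EuclideanSpace.proj (𝕜 := ℝ) i).continuous.comp hβ) (hf.comp (contDiff_prodMk_right t)) _

theorem integral_betaGrad_eq_zero (hβ : ContDiff ℝ 1 β)
    (hdiv : ∀ x, ∑ i, fderiv ℝ (fun y => β y i) x (EuclideanSpace.single i 1) = 0)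
    (hf : ContDiff ℝ 1 f) (hc : HasCompactSupport fun x => f (t, x)) :
    ∫ x, betaGrad β f t x = 0 := by
  have hg : ContDiff ℝ 1 fun y => f (t, y) := hf.comp (contDiff_prodMk_right t)
  have hβi (i : Fin n) : ContDiff ℝ 1 fun y => β y i :=
    (EuclideanSpace.proj (𝕜 := ℝ) i).contDiff.comp hβ
  have hdivβ_mul (i : Fin n) :
      Integrable fun x => fderiv ℝ (fun y => β y i) x (EuclideanSpace.single i 1) * f (t, x) :=
    ((((hβi i).continuous_fderiv one_ne_zero).clm_apply continuous_const).mul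
      hg.continuous).integrable_of_hasCompactSupport hc.mul_left
  calc ∫ x, betaGrad β f t x
      = ∑ i, ∫ x, β x i * fderiv ℝ (fun y => f (t, y)) x (EuclideanSpace.single i 1) :=
        integral_finsetSum _ fun i _ => hc.integrable_mul_fderiv_apply (hβi i).continuous hg _
    _ = -∫ x, ∑ i, fderiv ℝ (fun y => β y i) x (EuclideanSpace.single i 1) * f (t, x) := by
        rw [integral_finsetSum _ fun i _ => hdivβ_mul i, ← Finset.sum_neg_distrib]
        exact Finset.sum_congr rfl fun i _ =>
          integral_mul_fderiv_eq_neg_fderiv_mul_of_hasCompactSupport (hβi i) hg hc _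
    _ = 0 := by simp only [← Finset.sum_mul, hdiv, zero_mul, integral_zero, neg_zero]

theorem intervalIntegral_integral_partialT (hf : ContDiff ℝ 1 f) {T : ℝ} (hT : 0 ≤ T)
    {K : Set (EuclideanSpace ℝ (Fin n))} (hK : IsCompact K)
    (hzero : ∀ t ∈ Icc 0 T, ∀ x ∉ K, partialT f t x = 0) :
    ∫ t in (0 : ℝ)..T, ∫ x, partialT f t x = ∫ x, (f (T, x) - f (0, x)) := by
  have hint : Integrable (Function.uncurry fun t x => partialT f t x)
      ((volume.restrict (Ioc 0 T)).prod volume) := by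
    rw [Measure.restrict_prod_eq_prod_univ]
    refine ((continuous_partialT hf).continuousOn.integrableOn_compact
      ((isCompact_Icc (a := 0) (b := T)).prod hK)).of_forall_sdiff_eq_zero
      (measurableSet_Ioc.prod .univ) ?_
    rintro ⟨t, x⟩ ⟨⟨ht, -⟩, hnot⟩
    exact hzero t (Ioc_subset_Icc_self ht) x fun hx => hnot ⟨Ioc_subset_Icc_self ht, hx⟩
  rw [intervalIntegral.integral_of_le hT, integral_integral_swap hint]
  congr 1 with x
  rw [← intervalIntegral.integral_of_le hT]
  exact intervalIntegral.integral_eq_sub_of_hasDerivAt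
    (fun t _ => hasDerivAt_partialT (hf.differentiable one_ne_zero _))
    (((continuous_partialT hf).comp (continuous_id.prodMk continuous_const)).intervalIntegrable 0 T)

theorem integral_transportDeriv_eq_integral_partialT (hβ : ContDiff ℝ 1 β)
    (hdiv : ∀ x, ∑ i, fderiv ℝ (fun y => β y i) x (EuclideanSpace.single i 1) = 0)
    (hf : ContDiff ℝ 1 f) (hc : HasCompactSupport fun x => f (t, x))
    (hint : Integrable fun x => partialT f t x) :
    ∫ x, transportDeriv β f t x = ∫ x, partialT f t x := by
  unfold transportDeriv
  rw [integral_add hint (integrable_betaGrad hβ.continuous hf hc),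
    integral_betaGrad_eq_zero hβ hdiv hf hc, add_zero]

end Transport

theorem weighted_energy_identity_general {n : ℕ} (T : ℝ) (hT : 0 < T)
    (β : EuclideanSpace ℝ (Fin n) → EuclideanSpace ℝ (Fin n))
    (hβ : ContDiff ℝ 1 β)
    (hdiv : ∀ x, ∑ i, fderiv ℝ (fun y => β y i) x (EuclideanSpace.single i 1) = 0)
    (ϖ : ℝ × EuclideanSpace ℝ (Fin n) → ℝ) (hϖ : ContDiff ℝ 1 ϖ)
    (hϖtrans : ∀ t x, partialT ϖ t x + betaGrad β ϖ t x = 0)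
    (v : ℝ × EuclideanSpace ℝ (Fin n) → ℝ) (hv : ContDiff ℝ 1 v)
    (K : Set (EuclideanSpace ℝ (Fin n))) (hK : IsCompact K)
    (hsupp : ∀ t ∈ Set.Icc (0:ℝ) T, ∀ x ∉ K, v (t, x) = 0) :
    (∫ t in (0:ℝ)..T, ∫ x,
        (partialT v t x + betaGrad β v t x) * (ϖ (t, x)) ^ 2 * v (t, x)) =
      (1/2) * (∫ x, (ϖ (T, x)) ^ 2 * (v (T, x)) ^ 2) -
        (1/2) * (∫ x, (ϖ (0, x)) ^ 2 * (v (0, x)) ^ 2) := by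
  set w : ℝ × EuclideanSpace ℝ (Fin n) → ℝ := fun p => (ϖ p * v p) ^ 2
  have hu : ContDiff ℝ 1 fun p => ϖ p * v p := hϖ.mul hv
  have hw : ContDiff ℝ 1 w := hu.pow 2
  have hwc : ∀ t ∈ Icc 0 T, HasCompactSupport fun x => w (t, x) := fun t ht =>
    HasCompactSupport.intro hK fun x hx => by simp [w, hsupp t ht x hx]
  have hpartial0 : ∀ t ∈ Icc 0 T, ∀ x ∉ K, partialT w t x = 0 := fun t ht x hx => by
    simp [w, partialT_sq (hu.differentiable one_ne_zero _), hsupp t ht x hx]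
  have hinner : ∀ t ∈ Icc 0 T,
      ∫ x, (partialT v t x + betaGrad β v t x) * ϖ (t, x) ^ 2 * v (t, x) =
        1 / 2 * ∫ x, partialT w t x := fun t ht => by
    rw [← integral_transportDeriv_eq_integral_partialT hβ hdiv hw (hwc t ht)
      (integrable_partialT hw hK (hpartial0 t ht)), ← integral_const_mul]
    congr 1 with x
    rw [transportDeriv_mul_sq_of_transportDeriv_eq_zero (hϖ.differentiable one_ne_zero _)
      (hv.differentiable one_ne_zero _) (hϖtrans t x), transportDeriv]
    ring
  have hwint : ∀ t ∈ Icc 0 T, Integrable fun x => w (t, x) := fun t ht =>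
    (hw.continuous.comp (continuous_const.prodMk continuous_id)).integrable_of_hasCompactSupport
      (hwc t ht)
  calc (∫ t in (0:ℝ)..T, ∫ x, (partialT v t x + betaGrad β v t x) * ϖ (t, x) ^ 2 * v (t, x))
      = ∫ t in (0:ℝ)..T, 1 / 2 * ∫ x, partialT w t x :=
        intervalIntegral.integral_congr fun t ht => hinner t (uIcc_of_le hT.le ▸ ht)
    _ = 1 / 2 * ∫ x, (w (T, x) - w (0, x)) := by
        rw [intervalIntegral.integral_const_mul,
          intervalIntegral_integral_partialT hw hT.le hK hpartial0]
    _ = _ := by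
        rw [integral_sub (hwint T ⟨hT.le, le_rfl⟩) (hwint 0 ⟨le_rfl, hT.le⟩)]
        simp only [w, mul_pow]
        ring

/-- Weighted energy balance ∫₀ᵀ (Lv, ϖ²v) dt = ½‖v(T)‖_ϖ² − ½‖v(0)‖_ϖ² for a
weight ϖ transported along the characteristics of L = ∂ₜ + β·∇. -/
theorem weighted_energy_identity {n : ℕ} (hn : 1 ≤ n) (T : ℝ) (hT : 0 < T)
    (β : EuclideanSpace ℝ (Fin n) → EuclideanSpace ℝ (Fin n))
    (hβ : ContDiff ℝ 1 β)
    (hdiv : ∀ x, ∑ i, fderiv ℝ (fun y => β y i) x (EuclideanSpace.single i 1) = 0)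
    (ϖ : ℝ × EuclideanSpace ℝ (Fin n) → ℝ) (hϖ : ContDiff ℝ 1 ϖ)
    (hϖtrans : ∀ t x, partialT ϖ t x + betaGrad β ϖ t x = 0)
    (v : ℝ × EuclideanSpace ℝ (Fin n) → ℝ) (hv : ContDiff ℝ 1 v)
    (K : Set (EuclideanSpace ℝ (Fin n))) (hK : IsCompact K)
    (hsupp : ∀ t ∈ Set.Icc (0:ℝ) T, ∀ x ∉ K, v (t, x) = 0) :
    (∫ t in (0:ℝ)..T, ∫ x,
        (partialT v t x + betaGrad β v t x) * (ϖ (t, x)) ^ 2 * v (t, x)) =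
      (1/2) * (∫ x, (ϖ (T, x)) ^ 2 * (v (T, x)) ^ 2) -
        (1/2) * (∫ x, (ϖ (0, x)) ^ 2 * (v (0, x)) ^ 2) :=
  weighted_energy_identity_general T hT β hβ hdiv ϖ hϖ hϖtrans v hv K hK hsupp
end

section
/- Let n ≥ 1, h > 0, K > 0, C₀ > 0 and δt > 0 with δt ≤ C₀·h. Let S ⊆ ℝⁿ be a nonempty bounded convex measurable set of diameter at most h, and let I ⊆ ℝ be a nonempty compact interval of length at most 2·δt. Let ϖ : ℝ × ℝⁿ → (0,∞) be C¹ and satisfy |∂ₜϖ(t,x)| + ‖∇ₓϖ(t,x)‖ ≤ (K·√h)^{−1}·ϖ(t,x) for all (t,x) ∈ ℝ × ℝⁿ. If (1 + 2·C₀)·√h/K ≤ 1/2, then for every v ∈ L²(S): ( sup_{(t,x) ∈ I × S} ϖ(t,x) )·‖v‖_{L²(S)} ≤ 2·inf_{t ∈ I} ‖ϖ(t,·)·v‖_{L²(S)}. -/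
/-!
The quantity `|∂ₜϖ| + ‖∇ₓϖ‖` bounds the derivative of `ϖ` against the max-norm of `ℝ × ℝⁿ`, so
`log ϖ` is `(K√h)⁻¹`-Lipschitz, while two points of `I × S` are at distance at most
`max (2δt) h ≤ (1 + 2C₀)h`. Hence `ϖ` varies on `I × S` by a factor at most `exp (1/2) ≤ 2`, i.e.
`sup ϖ ≤ 2 ϖ(t, x)` there, and the inequality follows by integrating
`(sup ϖ / 2)² v² ≤ ϖ(t, ·)² v²` over `S`.
-/

open MeasureTheory

section PartialDerivatives

variable {E F : Type*} [NormedAddCommGroup E] [NormedSpace ℝ E]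
  [NormedAddCommGroup F] [NormedSpace ℝ F]

theorem fderiv_prod_apply_eq_partials {f : ℝ × E → F} {z : ℝ × E}
    (hf : DifferentiableAt ℝ f z) (u : ℝ × E) :
    fderiv ℝ f z u =
      u.1 • deriv (fun s => f (s, z.2)) z.1 + fderiv ℝ (fun y => f (z.1, y)) z.2 u.2 := by
  have htime : HasDerivAt (fun s => f (s, z.2)) (fderiv ℝ f z (1, 0)) z.1 :=
    hf.hasFDerivAt.comp_hasDerivAt z.1 ((hasDerivAt_id z.1).prodMk (hasDerivAt_const z.1 z.2))
  have hspace : HasFDerivAt (fun y => f (z.1, y)) ((fderiv ℝ f z).comp (.inr ℝ ℝ E)) z.2 :=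
    hf.hasFDerivAt.comp z.2 (hasFDerivAt_prodMk_right z.1 z.2)
  rw [htime.deriv, hspace.fderiv, ContinuousLinearMap.comp_apply, ContinuousLinearMap.inr_apply,
    ← ContinuousLinearMap.map_smul, ← map_add]
  congr 1
  ext <;> simp

theorem norm_fderiv_prod_apply_le {f : ℝ × E → F} {z : ℝ × E}
    (hf : DifferentiableAt ℝ f z) (u : ℝ × E) :
    ‖fderiv ℝ f z u‖ ≤
      (‖deriv (fun s => f (s, z.2)) z.1‖ + ‖fderiv ℝ (fun y => f (z.1, y)) z.2‖) * ‖u‖ := by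
  rw [fderiv_prod_apply_eq_partials hf]
  set A := ‖deriv (fun s => f (s, z.2)) z.1‖
  set B := ‖fderiv ℝ (fun y => f (z.1, y)) z.2‖
  calc _ ≤ ‖u.1‖ * A + B * ‖u.2‖ :=
        norm_add_le_of_le (norm_smul_le _ _) (ContinuousLinearMap.le_opNorm _ _)
    _ ≤ ‖u‖ * A + B * ‖u‖ := by gcongr; exacts [norm_fst_le u, norm_snd_le u]
    _ = (A + B) * ‖u‖ := by ring

end PartialDerivatives

section LogLipschitz

variable {E : Type*} [NormedAddCommGroup E] [NormedSpace ℝ E]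

theorem le_exp_mul_of_abs_fderiv_apply_le {f : E → ℝ} {p q : E} {c : ℝ}
    (hf : ∀ z ∈ segment ℝ q p, DifferentiableAt ℝ f z)
    (hpos : ∀ z ∈ segment ℝ q p, 0 < f z)
    (hbound : ∀ z ∈ segment ℝ q p, |fderiv ℝ f z (p - q)| ≤ c * f z) :
    f p ≤ Real.exp c * f q := by
  set γ : ℝ → E := fun r => q + r • (p - q)
  have hγ : ∀ r ∈ Set.Icc (0 : ℝ) 1, γ r ∈ segment ℝ q p := fun r hr => by
    rw [segment_eq_image']; exact ⟨r, hr, rfl⟩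
  have hderiv : ∀ r ∈ Set.Icc (0 : ℝ) 1, HasDerivWithinAt (fun r => Real.log (f (γ r)))
      (fderiv ℝ f (γ r) (p - q) / f (γ r)) (Set.Icc 0 1) r := by
    intro r hr
    have hγ' : HasDerivAt γ (p - q) r := by
      simpa only [id_eq, one_smul] using ((hasDerivAt_id r).smul_const (p - q)).const_add q
    exact (((hf _ (hγ r hr)).hasFDerivAt.comp_hasDerivAt r hγ').log
      (hpos _ (hγ r hr)).ne').hasDerivWithinAt
  have hderiv_le : ∀ r ∈ Set.Icc (0 : ℝ) 1, ‖fderiv ℝ f (γ r) (p - q) / f (γ r)‖ ≤ c := by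
    intro r hr
    rw [Real.norm_eq_abs, abs_div, abs_of_pos (hpos _ (hγ r hr)), div_le_iff₀ (hpos _ (hγ r hr))]
    exact hbound _ (hγ r hr)
  have hlog := (convex_Icc (0 : ℝ) 1).norm_image_sub_le_of_norm_hasDerivWithin_le hderiv
    hderiv_le (Set.left_mem_Icc.2 zero_le_one) (Set.right_mem_Icc.2 zero_le_one)
  have hpq : Real.log (f p) ≤ c + Real.log (f q) := by
    simp only [γ, zero_smul, one_smul, add_zero, add_sub_cancel, sub_zero, norm_one,
      mul_one, Real.norm_eq_abs] at hlog
    linarith [le_abs_self (Real.log (f p) - Real.log (f q))]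
  rw [← Real.exp_log (hpos p (right_mem_segment ℝ q p)),
    ← Real.exp_log (hpos q (left_mem_segment ℝ q p)), ← Real.exp_add]
  exact Real.exp_le_exp.2 hpq

theorem le_exp_mul_norm_sub_mul_of_partials_le {f : ℝ × E → ℝ} (hf : Differentiable ℝ f)
    (hpos : ∀ z, 0 < f z) {L : ℝ}
    (hslow : ∀ (t : ℝ) (x : E),
      |deriv (fun s => f (s, x)) t| + ‖fderiv ℝ (fun y => f (t, y)) x‖ ≤ L * f (t, x))
    (p q : ℝ × E) :
    f p ≤ Real.exp (L * ‖p - q‖) * f q := by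
  refine le_exp_mul_of_abs_fderiv_apply_le (fun z _ => hf z) (fun z _ => hpos z) fun z _ => ?_
  calc |fderiv ℝ f z (p - q)|
      ≤ (|deriv (fun s => f (s, z.2)) z.1| + ‖fderiv ℝ (fun y => f (z.1, y)) z.2‖) * ‖p - q‖ :=
        norm_fderiv_prod_apply_le (hf z) (p - q)
    _ ≤ L * f z * ‖p - q‖ := by gcongr; exact hslow z.1 z.2
    _ = L * ‖p - q‖ * f z := by ring

end LogLipschitz

theorem Real.exp_half_le_two : Real.exp (1 / 2) ≤ 2 := by
  rw [← Real.le_log_iff_exp_le two_pos]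
  linarith [Real.log_two_gt_d9]

theorem inv_mul_norm_prod_le_half {E : Type*} [NormedAddCommGroup E] {h K C₀ δt : ℝ}
    (hh : 0 < h) (hK : 0 < K) (hδt : 0 ≤ δt) (hδth : δt ≤ C₀ * h)
    (hsmall : (1 + 2 * C₀) * Real.sqrt h / K ≤ 1 / 2) {u : ℝ × E}
    (hu₁ : |u.1| ≤ 2 * δt) (hu₂ : ‖u.2‖ ≤ h) :
    (K * Real.sqrt h)⁻¹ * ‖u‖ ≤ 1 / 2 := by
  have hC₀ : 0 ≤ C₀ := nonneg_of_mul_nonneg_left (by linarith) hh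
  have hsqrt := Real.mul_self_sqrt hh.le
  have hu : ‖u‖ ≤ (1 + 2 * C₀) * Real.sqrt h * Real.sqrt h := by
    rw [Prod.norm_def, Real.norm_eq_abs]
    exact max_le (by nlinarith) (by nlinarith)
  rw [inv_mul_le_iff₀ (by positivity)]
  rw [div_le_iff₀ hK] at hsmall
  nlinarith [Real.sqrt_nonneg h]

theorem mul_sqrt_integral_sq_le {α : Type*} [MeasurableSpace α] {μ : Measure α}
    {v w : α → ℝ} {c C : ℝ} (hc : 0 ≤ c) (hv : MemLp v 2 μ) (hw : AEStronglyMeasurable w μ)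
    (hwC : ∀ᵐ x ∂μ, ‖w x‖ ≤ C) (hcw : ∀ᵐ x ∂μ, c ≤ w x) :
    c * Real.sqrt (∫ x, v x ^ 2 ∂μ) ≤ Real.sqrt (∫ x, (w x * v x) ^ 2 ∂μ) := by
  have hwv : MemLp (fun x => w x * v x) 2 μ := hv.mul' (memLp_top_of_bound hw C hwC)
  have hint : c ^ 2 * ∫ x, v x ^ 2 ∂μ ≤ ∫ x, (w x * v x) ^ 2 ∂μ := by
    rw [← integral_const_mul]
    refine integral_mono_ae (hv.integrable_sq.const_mul _) hwv.integrable_sq ?_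
    filter_upwards [hcw] with x hx
    rw [mul_pow]
    gcongr
  calc c * Real.sqrt (∫ x, v x ^ 2 ∂μ) = Real.sqrt (c ^ 2 * ∫ x, v x ^ 2 ∂μ) := by
        rw [Real.sqrt_mul (sq_nonneg c), Real.sqrt_sq hc]
    _ ≤ _ := Real.sqrt_le_sqrt hint

theorem weight_moving_inequality_general {n : ℕ}
    (h K C₀ δt : ℝ) (hh : 0 < h) (hK : 0 < K)
    (hδth : δt ≤ C₀ * h)
    (S : Set (EuclideanSpace ℝ (Fin n)))
    (hSbdd : Bornology.IsBounded S)
    (hSmeas : MeasurableSet S) (hdiam : Metric.diam S ≤ h)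
    (a b : ℝ) (hab : a ≤ b) (hlen : b - a ≤ 2 * δt)
    (ϖ : ℝ × EuclideanSpace ℝ (Fin n) → ℝ) (hϖ : ContDiff ℝ 1 ϖ)
    (hϖpos : ∀ p, 0 < ϖ p)
    (hϖslow : ∀ (t : ℝ) (x : EuclideanSpace ℝ (Fin n)),
      |deriv (fun s => ϖ (s, x)) t| + ‖fderiv ℝ (fun y => ϖ (t, y)) x‖ ≤
        (K * Real.sqrt h)⁻¹ * ϖ (t, x))
    (hsmall : (1 + 2 * C₀) * Real.sqrt h / K ≤ 1 / 2)
    (v : EuclideanSpace ℝ (Fin n) → ℝ)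
    (hv : MemLp v 2 (volume.restrict S)) :
    sSup (ϖ '' (Set.Icc a b ×ˢ S)) * Real.sqrt (∫ x in S, (v x) ^ 2) ≤
      2 * sInf ((fun t => Real.sqrt (∫ x in S, (ϖ (t, x) * v x) ^ 2)) ''
        Set.Icc a b) := by
  have hδt : 0 ≤ δt := by linarith
  have hratio : ∀ p ∈ Set.Icc a b ×ˢ S, ∀ q ∈ Set.Icc a b ×ˢ S, ϖ p ≤ 2 * ϖ q := by
    rintro ⟨t, x⟩ ⟨ht, hx⟩ ⟨s, y⟩ ⟨hs, hy⟩
    have hts : |t - s| ≤ 2 * δt :=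
      abs_sub_le_iff.2 ⟨by linarith [ht.2, hs.1], by linarith [ht.1, hs.2]⟩
    have hxy : ‖x - y‖ ≤ h := by
      rw [← dist_eq_norm]; exact (Metric.dist_le_diam_of_mem hSbdd hx hy).trans hdiam
    calc ϖ (t, x) ≤ Real.exp ((K * Real.sqrt h)⁻¹ * ‖(t, x) - (s, y)‖) * ϖ (s, y) :=
          le_exp_mul_norm_sub_mul_of_partials_le (hϖ.differentiable one_ne_zero) hϖpos hϖslow _ _
      _ ≤ 2 * ϖ (s, y) := mul_le_mul_of_nonneg_right ((Real.exp_le_exp.2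
          (inv_mul_norm_prod_le_half hh hK hδt hδth hsmall hts hxy)).trans Real.exp_half_le_two)
          (hϖpos _).le
  set M := sSup (ϖ '' (Set.Icc a b ×ˢ S))
  have hM0 : 0 ≤ M := Real.sSup_nonneg (Set.forall_mem_image.2 fun p _ => (hϖpos p).le)
  have hM : ∀ p ∈ Set.Icc a b ×ˢ S, M / 2 ≤ ϖ p := fun p hp => by
    linarith [Real.sSup_le (Set.forall_mem_image.2 fun q hq => hratio q hq p hp)
      (by linarith [hϖpos p] : 0 ≤ 2 * ϖ p)]
  have hper : ∀ t ∈ Set.Icc a b,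
      M / 2 * Real.sqrt (∫ x in S, v x ^ 2) ≤ Real.sqrt (∫ x in S, (ϖ (t, x) * v x) ^ 2) := by
    intro t ht
    have hcont : Continuous fun x => ϖ (t, x) := hϖ.continuous.comp (Continuous.prodMk_right t)
    obtain ⟨C, hC⟩ := hSbdd.isCompact_closure.exists_bound_of_continuousOn hcont.continuousOn
    exact mul_sqrt_integral_sq_le (by positivity) hv hcont.aestronglyMeasurable.restrict
      (ae_restrict_of_forall_mem hSmeas fun x hx => hC x (subset_closure hx))
      (ae_restrict_of_forall_mem hSmeas fun x hx => hM (t, x) ⟨ht, hx⟩)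
  have := le_csInf ((Set.nonempty_Icc.2 hab).image _) (Set.forall_mem_image.2 hper)
  linarith

/-- The weight-moving inequality: a slowly varying positive weight whose
space–time logarithmic derivative is of size (K√h)⁻¹ can be moved in and out of
L² norms over a mesh element S of diameter ≤ h and a time window of length
≤ 2δt (δt ≤ C₀h), at the price of a factor 2. -/
theorem weight_moving_inequality {n : ℕ} (hn : 1 ≤ n)
    (h K C₀ δt : ℝ) (hh : 0 < h) (hK : 0 < K) (hC₀ : 0 < C₀)
    (hδt : 0 < δt) (hδth : δt ≤ C₀ * h)
    (S : Set (EuclideanSpace ℝ (Fin n))) (hS : S.Nonempty)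
    (hSbdd : Bornology.IsBounded S) (hSconv : Convex ℝ S)
    (hSmeas : MeasurableSet S) (hdiam : Metric.diam S ≤ h)
    (a b : ℝ) (hab : a ≤ b) (hlen : b - a ≤ 2 * δt)
    (ϖ : ℝ × EuclideanSpace ℝ (Fin n) → ℝ) (hϖ : ContDiff ℝ 1 ϖ)
    (hϖpos : ∀ p, 0 < ϖ p)
    (hϖslow : ∀ (t : ℝ) (x : EuclideanSpace ℝ (Fin n)),
      |deriv (fun s => ϖ (s, x)) t| + ‖fderiv ℝ (fun y => ϖ (t, y)) x‖ ≤
        (K * Real.sqrt h)⁻¹ * ϖ (t, x))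
    (hsmall : (1 + 2 * C₀) * Real.sqrt h / K ≤ 1 / 2)
    (v : EuclideanSpace ℝ (Fin n) → ℝ)
    (hv : MemLp v 2 (volume.restrict S)) :
    sSup (ϖ '' (Set.Icc a b ×ˢ S)) * Real.sqrt (∫ x in S, (v x) ^ 2) ≤
      2 * sInf ((fun t => Real.sqrt (∫ x in S, (ϖ (t, x) * v x) ^ 2)) ''
        Set.Icc a b) :=
  weight_moving_inequality_general h K C₀ δt hh hK hδth S hSbdd hSmeas hdiam a b hab hlen ϖ hϖ hϖpos
    hϖslow hsmall v hv
end
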